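/- Deterministic drift-control lemma: Let α : ℕ → ℝ and ε > 0, U > 0. Define n₁ = inf{n : α(n) > εn} and recursively n_{k+1} = inf{n > n_k + U : α(n) − εn > α(n_k) − εn_k} (with inf ∅ = ∞). Suppose |α(n+1) − α(n)| ≤ 1 for all n, and lim_{k→∞} n_k/k = ∞ (where only finitely many n_k may be finite, or all are finite). Then limsup_{n→∞} α(n)/n ≤ ε. -/

import Mathlib

open Filter

/-- Deterministic drift-control lemma: let `α : ℕ → ℝ` have steps bounded by `1`,
`ε, U > 0`, and let `nseq k` enumerate the successive record times of `α(n) − εn`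
separated by gaps larger than `U` (with `nseq 0` the first time `α(n) > εn`). If
`nseq k / k → ∞`, then `limsup α(n)/n ≤ ε`. -/
theorem drift_control (a : ℕ → ℝ) (ε U : ℝ) (hε : 0 < ε) (hU : 0 < U)
    (hstep : ∀ n : ℕ, |a (n + 1) - a n| ≤ 1)
    (nseq : ℕ → ℕ)
    -- `nseq 0 = inf{n : α(n) > εn}`:
    (hfirst : ε * nseq 0 < a (nseq 0))
    (hfirst_min : ∀ m : ℕ, m < nseq 0 → a m ≤ ε * m)
    -- `nseq (k+1) = inf{n > nseq k + U : α(n) − εn > α(nseq k) − ε nseq k}`: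
    (hgap : ∀ k, (nseq k : ℝ) + U < nseq (k + 1))
    (hrec : ∀ k, a (nseq k) - ε * nseq k < a (nseq (k + 1)) - ε * nseq (k + 1))
    (hmin : ∀ k, ∀ m : ℕ, (nseq k : ℝ) + U < m → m < nseq (k + 1) →
      a m - ε * m ≤ a (nseq k) - ε * nseq k)
    (hlim : Tendsto (fun k => (nseq k : ℝ) / k) atTop atTop) :
    Filter.limsup (fun n : ℕ => a n / n) atTop ≤ ε := by
  -- step-chain bounds
  have chain : ∀ m d : ℕ, |a (m + d) - a m| ≤ d := by
    intro m d
    induction d with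
    | zero => simp
    | succ d ih =>
      have h := abs_le.1 (hstep (m + d))
      have ih' := abs_le.1 ih
      have he : m + (d + 1) = m + d + 1 := by omega
      rw [he, abs_le]
      push_cast
      exact ⟨by linarith [ih'.1, h.1], by linarith [ih'.2, h.2]⟩
  -- drift-adjusted chain bound
  have fchain : ∀ m n : ℕ, m ≤ n →
      a n - ε * n ≤ a m - ε * m + (1 + ε) * ((n : ℝ) - m) := by
    intro m n h
    obtain ⟨d, rfl⟩ := Nat.exists_eq_add_of_le h
    have hc := (abs_le.1 (chain m d)).2
    have hd : (0:ℝ) ≤ d := Nat.cast_nonneg d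
    push_cast
    nlinarith [mul_nonneg hε.le hd]
  -- monotonicity of record times
  have mono : ∀ k, nseq k < nseq (k + 1) := by
    intro k
    have := hgap k
    exact_mod_cast lt_of_le_of_lt (by linarith : (nseq k : ℝ) ≤ (nseq k : ℝ) + U) this
  obtain ⟨C, hC⟩ : ∃ C : ℝ, C = (U + 1) * (1 + ε) := ⟨_, rfl⟩
  have hCpos : 0 < C := by rw [hC]; positivity
  obtain ⟨A, hA⟩ : ∃ A : ℝ, A = a (nseq 0) - ε * nseq 0 := ⟨_, rfl⟩
  -- record increments are bounded by C
  have recstep : ∀ k, a (nseq (k+1)) - ε * nseq (k+1) ≤ a (nseq k) - ε * nseq k + C := by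
    intro k
    have h1 : 1 ≤ nseq (k+1) := Nat.one_le_iff_ne_zero.2 (by
      intro h; have := mono k; omega)
    set N := nseq (k+1) with hN
    set m := N - 1 with hm
    have hm1 : m + 1 = N := Nat.sub_add_cancel h1
    by_cases hc : (m : ℝ) ≤ (nseq k : ℝ) + U
    · have hle : nseq k ≤ N := (mono k).le
      have := fchain (nseq k) N hle
      have hNle : (N : ℝ) ≤ (nseq k : ℝ) + U + 1 := by
        have : ((m : ℝ) + 1) = (N : ℝ) := by exact_mod_cast hm1
        linarith
      have hle' : (nseq k : ℝ) ≤ N := by exact_mod_cast hle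
      nlinarith [this, hNle, hle', hε.le]
    · push_neg at hc
      have hmlt : m < N := by omega
      have hfm := hmin k m hc hmlt
      have hmN : m ≤ N := hmlt.le
      have := fchain m N hmN
      have hcast : ((m : ℝ) + 1) = (N : ℝ) := by exact_mod_cast hm1
      nlinarith [hε.le, hU.le, this, hfm]
  -- records bounded linearly in k
  have records : ∀ k, a (nseq k) - ε * nseq k ≤ A + k * C := by
    intro k
    induction k with
    | zero => simp [hA]
    | succ k ih =>
      have := recstep k
      push_cast
      linarith
  -- bound between consecutive records
  have between : ∀ k n, nseq k ≤ n → n < nseq (k+1) →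
      a n - ε * n ≤ A + ((k : ℝ) + 1) * C := by
    intro k n hkn hnk
    by_cases hc : (n : ℝ) ≤ (nseq k : ℝ) + U
    · have := fchain (nseq k) n hkn
      have hr := records k
      have hd : (n : ℝ) - nseq k ≤ U := by linarith
      have hd0 : (0:ℝ) ≤ (n : ℝ) - nseq k := by
        have : (nseq k : ℝ) ≤ n := by exact_mod_cast hkn
        linarith
      nlinarith [hε.le]
    · push_neg at hc
      have := hmin k n hc hnk
      have hr := records k
      nlinarith [hCpos.le]
  -- record times grow at least linearly
  have grow : ∀ k, nseq 0 + k ≤ nseq k := by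
    intro k
    induction k with
    | zero => omega
    | succ k ih => have := mono k; omega
  -- existence of bracketing record index
  have bracket : ∀ n, nseq 0 ≤ n → ∃ k, nseq k ≤ n ∧ n < nseq (k+1) := by
    intro n hn
    have hex : ∃ k, n < nseq k := ⟨n + 1, by have := grow (n+1); omega⟩
    have h0 : Nat.find hex ≠ 0 := by
      intro h
      have := Nat.find_spec hex
      rw [h] at this; omega
    obtain ⟨j, hj⟩ : ∃ j, Nat.find hex = j + 1 := ⟨Nat.find hex - 1, by omega⟩
    refine ⟨j, ?_, ?_⟩
    · have := Nat.find_min hex (m := j) (by omega)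
      omega
    · have := Nat.find_spec hex
      rw [hj] at this; exact this
  -- lower bound for coboundedness
  have cobdd : IsCoboundedUnder (· ≤ ·) atTop (fun n : ℕ => a n / n) := by
    apply isCoboundedUnder_le_of_eventually_le (l := atTop) (x := -(|a 0| + 1))
    filter_upwards [eventually_ge_atTop 1] with n hn
    have hn0 : (0:ℝ) < n := by exact_mod_cast hn
    have hc := (abs_le.1 (chain 0 n)).1
    simp only [Nat.zero_add] at hc
    rw [le_div_iff₀ hn0]
    have h1 : (1:ℝ) ≤ n := by exact_mod_cast hn
    nlinarith [abs_nonneg (a 0), neg_abs_le (a 0)]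
  -- main: limsup ≤ ε + δ for every δ > 0
  have key : ∀ δ : ℝ, 0 < δ → Filter.limsup (fun n : ℕ => a n / n) atTop ≤ ε + δ := by
    intro δ hδ
    apply limsup_le_of_le cobdd
    obtain ⟨M, hM⟩ : ∃ M : ℝ, M = 2 * C / δ + 1 := ⟨_, rfl⟩
    have hMpos : 0 < M := by rw [hM]; positivity
    have hCM : C / M ≤ δ / 2 := by
      rw [div_le_iff₀ hMpos]
      have h1 : δ / 2 * M = C + δ / 2 := by rw [hM]; field_simp
      nlinarith
    obtain ⟨K, hK⟩ := eventually_atTop.1 (hlim.eventually_ge_atTop M)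
    obtain ⟨B, hB⟩ : ∃ B : ℝ, B = A + ((K : ℝ) + 1) * C := ⟨_, rfl⟩
    have hBev : ∀ᶠ n : ℕ in atTop, B / n ≤ δ / 2 := by
      have := tendsto_const_div_atTop_nhds_zero_nat B
      exact this.eventually (eventually_le_nhds (by positivity))
    filter_upwards [hBev, eventually_ge_atTop (nseq 0), eventually_ge_atTop 1]
      with n hBn hn0 hn1
    have hnpos : (0:ℝ) < n := by exact_mod_cast hn1
    obtain ⟨k, hk1, hk2⟩ := bracket n hn0
    have hfb := between k n hk1 hk2
    -- bound k
    have hkb : (k : ℝ) ≤ (K : ℝ) + (n : ℝ) / M := by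
      by_cases hkK : k ≤ K
      · have : (k:ℝ) ≤ K := by exact_mod_cast hkK
        have : (0:ℝ) ≤ (n:ℝ) / M := by positivity
        linarith [show (k:ℝ) ≤ (K:ℝ) from by exact_mod_cast hkK]
      · push_neg at hkK
        have hKk := hK k (le_of_lt hkK)
        have hkpos : (0:ℝ) < k := by
          have : 1 ≤ k := by omega
          exact_mod_cast this
        rw [le_div_iff₀ hkpos] at hKk
        have hnn : (nseq k : ℝ) ≤ n := by exact_mod_cast hk1
        have h2 : (k:ℝ) * M ≤ n := by nlinarith
        have h3 : (k:ℝ) ≤ (n:ℝ) / M := by rw [le_div_iff₀ hMpos]; linarith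
        linarith
    -- combine
    have hfb2 : a n - ε * n ≤ B + (C / M) * n := by
      have h1 : ((k : ℝ) + 1) * C ≤ ((K : ℝ) + (n : ℝ) / M + 1) * C := by
        apply mul_le_mul_of_nonneg_right _ hCpos.le
        linarith
      have h2 : ((K : ℝ) + (n : ℝ) / M + 1) * C = ((K:ℝ) + 1) * C + (C / M) * n := by
        field_simp; ring
      linarith [hfb, h1, h2.le]
    have hBn' : B ≤ (δ / 2) * n := by
      rw [div_le_iff₀ hnpos] at hBn; linarith
    have hCMn : (C / M) * n ≤ (δ / 2) * n :=
      mul_le_mul_of_nonneg_right hCM hnpos.le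
    rw [div_le_iff₀ hnpos]
    linarith
  by_contra hcon
  push_neg at hcon
  have := key ((Filter.limsup (fun n : ℕ => a n / n) atTop - ε) / 2) (by linarith)
  linarith
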